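/- For every nonempty finite multiset s over L, the splitting-rule evaluation lies between the minimum and the maximum of the terms: min(s) ≤ ⟨⊻ s⟩₋⁺ ≤ max(s). -/

import Mathlib

/-! If `m` and `M` are the least and greatest terms, the two folds in the splitting rule are
`min 0 m` and `max 0 M`. For `0 ≤ a` and `b ≤ 0` the symmetric maximum `a ⊻ b` is `b`, `0` or `a`
according as `a < -b`, `a = -b` or `-b < a`; in each case this value lies in `[m, M]`. -/

/-- The symmetric maximum on a linear order `L` with negation `neg` and
distinguished element `zero`; `max x (neg x)` plays the role of `|x|`. -/
def symMax {L : Type*} [LinearOrder L] (neg : L → L) (zero : L) (a b : L) : L :=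
  if b = neg a then zero
  else if max (max a (neg a)) (max b (neg b)) = neg a ∨
          max (max a (neg a)) (max b (neg b)) = neg b then
    neg (max (max a (neg a)) (max b (neg b)))
  else max (max a (neg a)) (max b (neg b))

/-- The symmetric minimum on a linear order `L` with negation `neg` and
distinguished element `zero`. -/
def symMin {L : Type*} [LinearOrder L] (neg : L → L) (zero : L) (a b : L) : L :=
  if (a < zero ∧ zero < b) ∨ (b < zero ∧ zero < a) then
    neg (min (max a (neg a)) (max b (neg b)))
  else min (max a (neg a)) (max b (neg b))

/-- The splitting-rule evaluation `⟨⊻ s⟩₋⁺` of a finite multiset `s`: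
the symmetric maximum of the max of the nonnegative terms (`zero` if none)
and the min of the negative terms (`zero` if none). -/
def splitEval {L : Type*} [LinearOrder L] (neg : L → L) (zero : L) (s : Multiset L) : L :=
  symMax neg zero ((s.filter (fun x => zero ≤ x)).fold max zero)
    ((s.filter (fun x => x < zero)).fold min zero)

namespace Multiset

variable {α : Type*} [LinearOrder α]

theorem fold_max_le_iff {b c : α} {s : Multiset α} :
    s.fold max b ≤ c ↔ b ≤ c ∧ ∀ x ∈ s, x ≤ c := by
  induction s using Multiset.induction with
  | empty => simp
  | cons a s ih => simp only [fold_cons_left, max_le_iff, ih, forall_mem_cons]; tauto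

theorem le_fold_min_iff {b c : α} {s : Multiset α} :
    c ≤ s.fold min b ↔ c ≤ b ∧ ∀ x ∈ s, c ≤ x := by
  induction s using Multiset.induction with
  | empty => simp
  | cons a s ih => simp only [fold_cons_left, le_min_iff, ih, forall_mem_cons]; tauto

theorem fold_max_filter_ge_eq_max (b : α) {s : Multiset α} {m : α} (hm : m ∈ s)
    (hle : ∀ x ∈ s, x ≤ m) : (s.filter (fun x => b ≤ x)).fold max b = max b m := by
  refine eq_of_forall_ge_iff fun c => ?_
  simp only [fold_max_le_iff, mem_filter, max_le_iff, and_imp, and_congr_right_iff]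
  exact fun hbc => ⟨fun h => (le_total b m).elim (h m hm) fun hmb => hmb.trans hbc,
    fun hmc x hx _ => (hle x hx).trans hmc⟩

theorem fold_min_filter_lt_eq_min (b : α) {s : Multiset α} {m : α} (hm : m ∈ s)
    (hle : ∀ x ∈ s, m ≤ x) : (s.filter (fun x => x < b)).fold min b = min b m := by
  refine eq_of_forall_le_iff fun c => ?_
  simp only [le_fold_min_iff, mem_filter, le_min_iff, and_imp, and_congr_right_iff]
  exact fun hcb => ⟨fun h => (lt_or_ge m b).elim (h m hm) hcb.trans,
    fun hcm x hx _ => hcm.trans (hle x hx)⟩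

end Multiset

structure IsOrderNegation {L : Type*} [LinearOrder L] (neg : L → L) (zero : L) : Prop where
  neg_neg : ∀ x, neg (neg x) = x
  le_iff_neg_le_neg : ∀ x y, x ≤ y ↔ neg y ≤ neg x
  neg_zero : neg zero = zero

namespace IsOrderNegation

variable {L : Type*} [LinearOrder L] {neg : L → L} {zero a b : L}

theorem neg_le_zero (h : IsOrderNegation neg zero) (ha : zero ≤ a) : neg a ≤ zero :=
  h.neg_zero ▸ (h.le_iff_neg_le_neg zero a).mp ha

theorem zero_le_neg (h : IsOrderNegation neg zero) (hb : b ≤ zero) : zero ≤ neg b :=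
  h.neg_zero ▸ (h.le_iff_neg_le_neg b zero).mp hb

theorem zero_lt_neg (h : IsOrderNegation neg zero) (hb : b < zero) : zero < neg b := by
  rw [← h.neg_zero, lt_iff_not_ge, ← h.le_iff_neg_le_neg]
  exact hb.not_ge

theorem max_self_neg_of_nonneg (h : IsOrderNegation neg zero) (ha : zero ≤ a) :
    max a (neg a) = a :=
  max_eq_left ((h.neg_le_zero ha).trans ha)

theorem max_self_neg_of_nonpos (h : IsOrderNegation neg zero) (hb : b ≤ zero) :
    max b (neg b) = neg b :=
  max_eq_right (hb.trans (h.zero_le_neg hb))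

end IsOrderNegation

section SymMax

variable {L : Type*} [LinearOrder L] {neg : L → L} {zero a b : L}

theorem symMax_of_eq_neg (h : IsOrderNegation neg zero) (heq : a = neg b) :
    symMax neg zero a b = zero := by
  rw [symMax, if_pos (by rw [heq, h.neg_neg])]

theorem symMax_of_lt_neg (h : IsOrderNegation neg zero) (ha : zero ≤ a) (hb : b ≤ zero)
    (hlt : a < neg b) : symMax neg zero a b = b := by
  have hb' : b ≠ neg a := fun e => hlt.ne (by rw [e, h.neg_neg])
  rw [symMax, if_neg hb', h.max_self_neg_of_nonneg ha, h.max_self_neg_of_nonpos hb,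
    max_eq_right hlt.le, if_pos (Or.inr rfl), h.neg_neg]

theorem symMax_of_neg_lt (h : IsOrderNegation neg zero) (ha : zero ≤ a) (hb : b ≤ zero)
    (hlt : neg b < a) : symMax neg zero a b = a := by
  have hb' : b ≠ neg a := fun e => hlt.ne (by rw [e, h.neg_neg])
  rw [symMax, if_neg hb', h.max_self_neg_of_nonneg ha, h.max_self_neg_of_nonpos hb,
    max_eq_left hlt.le, if_neg]
  rintro (e | e)
  · exact (h.zero_le_neg hb).not_gt (hlt.trans_le (e.trans_le (h.neg_le_zero ha)))
  · exact hlt.ne e.symm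

theorem symMax_mem_Icc (h : IsOrderNegation neg zero) (ha : zero ≤ a) (hb : b ≤ zero) :
    symMax neg zero a b ∈ Set.Icc b a := by
  rcases lt_trichotomy a (neg b) with hlt | heq | hgt
  · rw [symMax_of_lt_neg h ha hb hlt]
    exact ⟨le_rfl, hb.trans ha⟩
  · rw [symMax_of_eq_neg h heq]
    exact ⟨hb, ha⟩
  · rw [symMax_of_neg_lt h ha hb hgt]
    exact ⟨hb.trans ha, le_rfl⟩

end SymMax

theorem splitEval_eq_symMax {L : Type*} [LinearOrder L] (neg : L → L) (zero : L)
    {s : Multiset L} {mn mx : L} (hmn : mn ∈ s) (hmn' : ∀ x ∈ s, mn ≤ x)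
    (hmx : mx ∈ s) (hmx' : ∀ x ∈ s, x ≤ mx) :
    splitEval neg zero s = symMax neg zero (max zero mx) (min zero mn) := by
  rw [splitEval, Multiset.fold_max_filter_ge_eq_max zero hmx hmx',
    Multiset.fold_min_filter_lt_eq_min zero hmn hmn']

theorem splitEval_between_min_and_max_general {L : Type*} [LinearOrder L]
    (neg : L → L) (zero : L)
    (hinv : ∀ x, neg (neg x) = x)
    (hord : ∀ x y, x ≤ y ↔ neg y ≤ neg x)
    (hzero : neg zero = zero)
    (s : Multiset L)
    (mn mx : L)
    (hmn : mn ∈ s) (hmn' : ∀ x ∈ s, mn ≤ x)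
    (hmx : mx ∈ s) (hmx' : ∀ x ∈ s, x ≤ mx) :
    mn ≤ splitEval neg zero s ∧ splitEval neg zero s ≤ mx := by
  have h : IsOrderNegation neg zero := ⟨hinv, hord, hzero⟩
  have hmn_mx : mn ≤ mx := hmn' mx hmx
  have ha : zero ≤ max zero mx := le_max_left _ _
  have hb : min zero mn ≤ zero := min_le_left _ _
  rw [splitEval_eq_symMax neg zero hmn hmn' hmx hmx']
  constructor
  · rcases le_or_gt mn zero with hle | hpos
    · simpa only [min_eq_right hle] using (symMax_mem_Icc h ha hb).1
    · rw [symMax_of_neg_lt h ha hb (by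
        rw [min_eq_left hpos.le, hzero]
        exact hpos.trans_le (hmn_mx.trans (le_max_right _ _)))]
      exact hmn_mx.trans (le_max_right _ _)
  · rcases le_or_gt zero mx with hle | hneg
    · simpa only [max_eq_right hle] using (symMax_mem_Icc h ha hb).2
    · rw [symMax_of_lt_neg h ha hb (by
        rw [max_eq_left hneg.le, min_eq_right (hmn_mx.trans hneg.le)]
        exact h.zero_lt_neg (hmn_mx.trans_lt hneg))]
      exact min_le_of_right_le hmn_mx

/-- for a nonempty finite multiset, the splitting-rule evaluation
lies between the minimum and the maximum of the terms. -/
theorem splitEval_between_min_and_max {L : Type*} [LinearOrder L]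
    (neg : L → L) (zero : L)
    (hinv : ∀ x, neg (neg x) = x)
    (hord : ∀ x y, x ≤ y ↔ neg y ≤ neg x)
    (hzero : neg zero = zero)
    (s : Multiset L) (hs : s ≠ 0)
    (mn mx : L)
    (hmn : mn ∈ s) (hmn' : ∀ x ∈ s, mn ≤ x)
    (hmx : mx ∈ s) (hmx' : ∀ x ∈ s, x ≤ mx) :
    mn ≤ splitEval neg zero s ∧ splitEval neg zero s ≤ mx :=
  splitEval_between_min_and_max_general neg zero hinv hord hzero s mn mx hmn hmn' hmx hmx'
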